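/- arXiv:2110.10663 — 5 statements merged into one kernel-verified Lean document; each statement's English description precedes it below -/
import Mathlib

section
/- Let 𝒯 be a triangulated category, ℐ a full subcategory of 𝒯, and n ≥ 1 a natural number. Then ⟨ℐ⟩_n = ([ℐ]_n)_sd; that is, the n-th thick building-block subcategory of ℐ coincides with the closure under summands of the n-th additive building-block subcategory of ℐ. -/
/-!
If `S` is closed under finite sums and shifts, then so is `S_sd`, which is also closed under
summands, so `⟨S_sd⟩ = S_sd`; for `S = [ℐ]` this is `⟨ℐ⟩ = [ℐ]_sd`. Every `[ℐ]_n` is closed under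
sums and shifts, because a direct sum of distinguished triangles is distinguished. Finally
`𝒜_sd * ℬ_sd ⊆ (𝒜 * ℬ)_sd`, since retractions of the outer terms of a distinguished triangle
extend to a retraction of its middle term. Hence
`⟨ℐ⟩_{n+1} = ⟨([ℐ]_n)_sd * [ℐ]_sd⟩ = ([ℐ]_n * [ℐ])_sd`.
-/

open CategoryTheory Category Limits Pretriangulated

universe v u

namespace RouquierDim

variable {C : Type u} [Category.{v} C] [Preadditive C] [HasZeroObject C]
  [HasShift C ℤ] [∀ n : ℤ, (shiftFunctor C n).Additive] [Pretriangulated C]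
  [HasBinaryBiproducts C]

/-- `Z` is a summand of `K`: there are maps `r : Z ⟶ K`, `k : K ⟶ Z` with `r ≫ k = 𝟙 Z`. -/
def IsSummand (Z K : C) : Prop := ∃ (r : Z ⟶ K) (k : K ⟶ Z), r ≫ k = 𝟙 Z

/-- The subcategory `ℐ * 𝒥`: objects `K` admitting a distinguished triangle
`K₀ ⟶ K ⟶ K₁ ⟶ K₀⟦1⟧` with `K₀ ∈ ℐ` and `K₁ ∈ 𝒥`. -/
def star (I J : Set C) : Set C :=
  {K | ∃ (K₀ K₁ : C) (f : K₀ ⟶ K) (g : K ⟶ K₁) (h : K₁ ⟶ K₀⟦(1 : ℤ)⟧),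
    Triangle.mk f g h ∈ (distTriang C) ∧ K₀ ∈ I ∧ K₁ ∈ J}

/-- Membership in `[ℐ]`, the smallest strictly full subcategory containing `ℐ` and
closed under finite direct sums and shifts. -/
inductive bracketMem (I : Set C) : C → Prop
  | of {X : C} (hX : X ∈ I) : bracketMem I X
  | zero {X : C} (hX : IsZero X) : bracketMem I X
  | shift {X : C} (n : ℤ) (hX : bracketMem I X) : bracketMem I (X⟦n⟧)
  | sum {X Y : C} (hX : bracketMem I X) (hY : bracketMem I Y) : bracketMem I (X ⊞ Y)
  | iso {X Y : C} (e : X ≅ Y) (hX : bracketMem I X) : bracketMem I Y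

/-- `[ℐ]` as a set of objects. -/
def bracket (I : Set C) : Set C := {X | bracketMem I X}

/-- Membership in `⟨ℐ⟩`, the smallest strictly full subcategory containing `ℐ` and
closed under finite direct sums, shifts, and summands. -/
inductive angleMem (I : Set C) : C → Prop
  | of {X : C} (hX : X ∈ I) : angleMem I X
  | zero {X : C} (hX : IsZero X) : angleMem I X
  | shift {X : C} (n : ℤ) (hX : angleMem I X) : angleMem I (X⟦n⟧)
  | sum {X Y : C} (hX : angleMem I X) (hY : angleMem I Y) : angleMem I (X ⊞ Y)
  | smd {X Y : C} (h : IsSummand X Y) (hY : angleMem I Y) : angleMem I X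
  | iso {X Y : C} (e : X ≅ Y) (hX : angleMem I X) : angleMem I Y

/-- `⟨ℐ⟩` as a set of objects. -/
def angle (I : Set C) : Set C := {X | angleMem I X}

/-- `ℐ_sd`: the smallest strictly full subcategory containing all summands of objects of `ℐ`. -/
def sd (I : Set C) : Set C := {Z | ∃ K ∈ I, IsSummand Z K}

/-- `[ℐ]_n` for `n ≥ 1`: `[ℐ]_1 = [ℐ]`, `[ℐ]_{n+1} = [ℐ]_n * [ℐ]`. (Value `∅` at `n = 0`.) -/
def bracketN (I : Set C) : ℕ → Set C
  | 0 => ∅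
  | 1 => bracket I
  | (n + 2) => star (bracketN I (n + 1)) (bracket I)

/-- `⟨ℐ⟩_n` for `n ≥ 1`: `⟨ℐ⟩_1 = ⟨ℐ⟩`, `⟨ℐ⟩_{n+1} = ⟨⟨ℐ⟩_n * ⟨ℐ⟩⟩`. (Value `∅` at `n = 0`.) -/
def angleN (I : Set C) : ℕ → Set C
  | 0 => ∅
  | 1 => angle I
  | (n + 2) => angle (star (angleN I (n + 1)) (angle I))

end RouquierDim

namespace RouquierDim

section Category

variable {C : Type u} [Category.{v} C]

lemma isSummand_iff_nonempty_retract {Z K : C} : IsSummand Z K ↔ Nonempty (Retract Z K) :=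
  ⟨fun ⟨r, k, h⟩ => ⟨⟨r, k, h⟩⟩, fun ⟨h⟩ => ⟨h.i, h.r, h.retract⟩⟩

lemma sd_eq_retractClosure (S : Set C) : sd S = ObjectProperty.retractClosure S := by
  ext Z
  exact ⟨fun ⟨K, hK, h⟩ => ⟨K, hK, isSummand_iff_nonempty_retract.1 h⟩,
    fun ⟨K, hK, h⟩ => ⟨K, hK, isSummand_iff_nonempty_retract.2 h⟩⟩

lemma subset_sd (S : Set C) : S ⊆ sd S := fun X hX => ⟨X, hX, 𝟙 X, 𝟙 X, comp_id _⟩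

lemma sd_empty : sd (∅ : Set C) = ∅ :=
  Set.eq_empty_of_forall_notMem fun _ ⟨_, h, _⟩ => h

end Category

section Additive

variable {C : Type u} [Category.{v} C] [Preadditive C] [HasBinaryBiproducts C]

noncomputable def _root_.CategoryTheory.Retract.biprodMap {X Y K L : C} (h : Retract X K)
    (h' : Retract Y L) : Retract (X ⊞ Y) (K ⊞ L) where
  i := biprod.map h.i h'.i
  r := biprod.map h.r h'.r
  retract := by ext <;> simp

noncomputable def biprodIsoPi [HasFiniteProducts C] (F : Bool → C) : F true ⊞ F false ≅ ∏ᶜ F where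
  hom := Pi.lift fun b => b.casesOn biprod.snd biprod.fst
  inv := biprod.lift (Pi.π F true) (Pi.π F false)
  inv_hom_id := Pi.hom_ext _ _ fun b => by cases b <;> simp

lemma biprod_map_comp_biprodIsoPi_hom [HasFiniteProducts C] {F G : Bool → C}
    (φ : ∀ b, F b ⟶ G b) :
    biprod.map (φ true) (φ false) ≫ (biprodIsoPi G).hom = (biprodIsoPi F).hom ≫ Limits.Pi.map φ :=
  Pi.hom_ext _ _ fun b => by cases b <;> simp [biprodIsoPi]

variable [HasShift C ℤ]

structure IsClosedUnderSumsAndShifts (S : Set C) : Prop where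
  zero : ∀ {X : C}, IsZero X → X ∈ S
  shift : ∀ {X : C} (n : ℤ), X ∈ S → X⟦n⟧ ∈ S
  sum : ∀ {X Y : C}, X ∈ S → Y ∈ S → (X ⊞ Y) ∈ S

lemma isClosedUnderSumsAndShifts_bracket (I : Set C) : IsClosedUnderSumsAndShifts (bracket I) :=
  ⟨bracketMem.zero, bracketMem.shift, bracketMem.sum⟩

lemma angle_mono {S T : Set C} (h : S ⊆ T) : angle S ⊆ angle T := by
  intro X hX
  induction hX with
  | of hX => exact angleMem.of (h hX)
  | zero hX => exact angleMem.zero hX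
  | shift n _ ih => exact angleMem.shift n ih
  | sum _ _ ih ih' => exact angleMem.sum ih ih'
  | smd hXY _ ih => exact angleMem.smd hXY ih
  | iso e _ ih => exact angleMem.iso e ih

lemma bracket_subset_angle (I : Set C) : bracket I ⊆ angle I := by
  intro X hX
  induction hX with
  | of hX => exact angleMem.of hX
  | zero hX => exact angleMem.zero hX
  | shift n _ ih => exact angleMem.shift n ih
  | sum _ _ ih ih' => exact angleMem.sum ih ih'
  | iso e _ ih => exact angleMem.iso e ih

lemma angle_sd_subset {S : Set C} (hS : IsClosedUnderSumsAndShifts S) : angle (sd S) ⊆ sd S := by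
  intro X hX
  rw [sd_eq_retractClosure] at hX ⊢
  induction hX with
  | of hX => exact hX
  | zero hX => exact ⟨_, hS.zero hX, ⟨Retract.refl _⟩⟩
  | shift n _ ih =>
    obtain ⟨K, hK, ⟨r⟩⟩ := ih
    exact ⟨K⟦n⟧, hS.shift n hK, ⟨r.map (shiftFunctor C n)⟩⟩
  | sum _ _ ih ih' =>
    obtain ⟨K, hK, ⟨r⟩⟩ := ih
    obtain ⟨L, hL, ⟨r'⟩⟩ := ih'
    exact ⟨K ⊞ L, hS.sum hK hL, ⟨r.biprodMap r'⟩⟩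
  | smd hXY _ ih =>
    obtain ⟨K, hK, ⟨r⟩⟩ := ih
    exact ⟨K, hK, ⟨(isSummand_iff_nonempty_retract.1 hXY).some.trans r⟩⟩
  | iso e _ ih =>
    obtain ⟨K, hK, ⟨r⟩⟩ := ih
    exact ⟨K, hK, ⟨(Retract.ofIso e.symm).trans r⟩⟩

lemma angle_eq_sd_of_subset {S T : Set C} (hS : IsClosedUnderSumsAndShifts S) (hTS : T ⊆ sd S)
    (hST : S ⊆ angle T) : angle T = sd S :=
  ((angle_mono hTS).trans (angle_sd_subset hS)).antisymm
    fun _ ⟨_, hK, hZK⟩ => angleMem.smd hZK (hST hK)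

lemma angle_eq_sd_bracket (I : Set C) : angle I = sd (bracket I) :=
  angle_eq_sd_of_subset (isClosedUnderSumsAndShifts_bracket I)
    (fun _ hX => subset_sd _ (bracketMem.of hX)) (bracket_subset_angle I)

end Additive

section Pretriangulated

variable {C : Type u} [Category.{v} C] [Preadditive C] [HasZeroObject C]
  [HasShift C ℤ] [∀ n : ℤ, (shiftFunctor C n).Additive] [Pretriangulated C]

lemma distinguished_of_isos {T : Triangle C} (hT : T ∈ distTriang C) {X Y Z : C}
    (e₁ : X ≅ T.obj₁) (e₂ : Y ≅ T.obj₂) (e₃ : Z ≅ T.obj₃) (f : X ⟶ Y) (g : Y ⟶ Z)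
    (comm₁ : f ≫ e₂.hom = e₁.hom ≫ T.mor₁) (comm₂ : g ≫ e₃.hom = e₂.hom ≫ T.mor₂) :
    Triangle.mk f g (e₃.hom ≫ T.mor₃ ≫ e₁.inv⟦(1 : ℤ)⟧') ∈ distTriang C :=
  isomorphic_distinguished _ hT _ <| Triangle.isoMk _ _ e₁ e₂ e₃ comm₁ comm₂ <| by
    -- `simp` does not see through `Triangle.mk` in the implicit objects of the goal
    change (e₃.hom ≫ T.mor₃ ≫ e₁.inv⟦(1 : ℤ)⟧') ≫ e₁.hom⟦(1 : ℤ)⟧' = e₃.hom ≫ T.mor₃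
    simp [← Functor.map_comp]

lemma star_mono {A A' B B' : Set C} (hA : A ⊆ A') (hB : B ⊆ B') : star A B ⊆ star A' B' :=
  fun _ ⟨K₀, K₁, f, g, h, hT, h₀, h₁⟩ => ⟨K₀, K₁, f, g, h, hT, hA h₀, hB h₁⟩

lemma star_sd_sd_subset (A B : Set C) : star (sd A) (sd B) ⊆ sd (star A B) := by
  simp only [sd_eq_retractClosure]
  exact ObjectProperty.extensionProduct_retractClosure_retractClosure_le A B

variable [HasBinaryBiproducts C]

lemma exists_distinguished_biprod {T₁ T₂ : Triangle C}
    (h₁ : T₁ ∈ distTriang C) (h₂ : T₂ ∈ distTriang C) :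
    ∃ h : T₁.obj₃ ⊞ T₂.obj₃ ⟶ (T₁.obj₁ ⊞ T₂.obj₁)⟦(1 : ℤ)⟧,
      Triangle.mk (biprod.map T₁.mor₁ T₂.mor₁) (biprod.map T₁.mor₂ T₂.mor₂) h ∈ distTriang C := by
  let T : Bool → Triangle C := fun b => cond b T₁ T₂
  have hT : ∀ b, T b ∈ distTriang C := fun b => by cases b <;> assumption
  exact ⟨_, distinguished_of_isos (productTriangle_distinguished T hT) (biprodIsoPi _)
    (biprodIsoPi _) (biprodIsoPi _) _ _ (biprod_map_comp_biprodIsoPi_hom fun b => (T b).mor₁)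
    (biprod_map_comp_biprodIsoPi_hom fun b => (T b).mor₂)⟩

open ZeroObject in
lemma IsClosedUnderSumsAndShifts.star {A B : Set C} (hA : IsClosedUnderSumsAndShifts A)
    (hB : IsClosedUnderSumsAndShifts B) : IsClosedUnderSumsAndShifts (star A B) where
  zero {X} hX := ⟨X, 0, 𝟙 X, 0, 0, contractible_distinguished X, hA.zero hX,
    hB.zero (isZero_zero C)⟩
  shift n := fun ⟨_, _, _, _, _, hT, h₀, h₁⟩ =>
    ⟨_, _, _, _, _, Triangle.shift_distinguished _ hT n, hA.shift n h₀, hB.shift n h₁⟩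
  sum := fun ⟨_, _, _, _, _, hT, h₀, h₁⟩ ⟨_, _, _, _, _, hT', h₀', h₁'⟩ =>
    let ⟨_, hsum⟩ := exists_distinguished_biprod hT hT'
    ⟨_, _, _, _, _, hsum, hA.sum h₀ h₀', hB.sum h₁ h₁'⟩

lemma isClosedUnderSumsAndShifts_bracketN (I : Set C) :
    ∀ n : ℕ, IsClosedUnderSumsAndShifts (bracketN I (n + 1))
  | 0 => isClosedUnderSumsAndShifts_bracket I
  | n + 1 => (isClosedUnderSumsAndShifts_bracketN I n).star (isClosedUnderSumsAndShifts_bracket I)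

lemma angle_star_sd_sd {A B : Set C} (hA : IsClosedUnderSumsAndShifts A)
    (hB : IsClosedUnderSumsAndShifts B) : angle (star (sd A) (sd B)) = sd (star A B) :=
  angle_eq_sd_of_subset (hA.star hB) (star_sd_sd_subset A B)
    fun _ hX => angleMem.of (star_mono (subset_sd A) (subset_sd B) hX)

/-- For any full subcategory `ℐ` of a triangulated category and any `n ≥ 1`,
`⟨ℐ⟩_n = ([ℐ]_n)_sd`. -/
theorem angleN_eq_sd_bracketN (I : Set C) (n : ℕ) :
    angleN I n = sd (bracketN I n) := by
  match n with
  | 0 => exact sd_empty.symm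
  | 1 => exact angle_eq_sd_bracket I
  | n + 2 =>
    rw [angleN, bracketN, angleN_eq_sd_bracketN I (n + 1), angle_eq_sd_bracket I]
    exact angle_star_sd_sd (isClosedUnderSumsAndShifts_bracketN I n)
      (isClosedUnderSumsAndShifts_bracket I)

end Pretriangulated

end RouquierDim
end

section
/- Let 𝒯 be a triangulated category. Let ℐ and 𝒥 be thick full triangulated subcategories such that 𝒯 = ⟨ℐ ∪ 𝒥⟩_∞ and Hom(K, L) = 0 for every object K of 𝒥 and every object L of ℐ. Then 𝒯 = ⟨𝒥 * ℐ⟩; i.e., every object of 𝒯 is a summand of a finite direct sum of shifts of objects that are extensions of an object of ℐ by an object of 𝒥. -/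
/-!
Semiorthogonality makes the pieces of an object of `J * I` functorial. In a distinguished
triangle `A ⟶ X ⟶ B ⟶ A⟦1⟧` with `A ∈ J` and `B ∈ I`, the map `A ⟶ X` induces bijections
`Hom(W, A) ≃ Hom(W, X)` for `W ∈ J`, and `X ⟶ B` induces bijections `Hom(B, V) ≃ Hom(X, V)`
for `V` right orthogonal to `J`. Given a distinguished triangle `X ⟶ Y ⟶ Z ⟶ X⟦1⟧` with
`X, Z ∈ J * I`, gluing the pieces of `X` and `Z` and a five lemma for `Hom` produce `M ⟶ Y`
with `M ∈ J` and `Y ⟶ N` with `N ∈ I` having the same properties. The cone of `M ⟶ Y` and `N`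
then both represent `Hom(Y, -)` on the right orthogonal of `J`, so they are isomorphic and
`Y ∈ J * I`; no octahedral axiom is needed. Thus `J * I` is closed under extensions, hence so
is `⟨J * I⟩` (summands pass to extensions up to a square-zero endomorphism), and `⟨J * I⟩`
contains every `⟨I ∪ J⟩_n`.
-/

open CategoryTheory Category Limits Pretriangulated

universe v u

namespace RouquierDim

variable {C : Type u} [Category.{v} C] [Preadditive C] [HasZeroObject C]
  [HasShift C ℤ] [∀ n : ℤ, (shiftFunctor C n).Additive] [Pretriangulated C]
  [HasBinaryBiproducts C]

/-- `⟨ℐ⟩_∞ = ⋃_{n ∈ ℕ} ⟨ℐ⟩_n`. -/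
def angleInf (I : Set C) : Set C := ⋃ n : ℕ, angleN I n

/-- A thick full triangulated subcategory: a strictly full subcategory containing the zero
objects, closed under shifts, extensions (hence cones), and summands. -/
structure IsThickTriangulatedSub (S : Set C) : Prop where
  zero : ∀ X : C, IsZero X → X ∈ S
  iso_closed : ∀ {X Y : C}, (X ≅ Y) → X ∈ S → Y ∈ S
  shift : ∀ (X : C) (n : ℤ), X ∈ S → X⟦n⟧ ∈ S
  ext₂ : ∀ (T : Triangle C), T ∈ (distTriang C) → T.obj₁ ∈ S → T.obj₃ ∈ S → T.obj₂ ∈ S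
  summand : ∀ {X Y : C}, IsSummand X Y → Y ∈ S → X ∈ S

open ZeroObject

section Category

variable {D : Type*} [Category D]

def CoyonedaBijectiveOn (S : ObjectProperty D) {X Y : D} (f : X ⟶ Y) : Prop :=
  ∀ ⦃W : D⦄, S W → Function.Bijective (fun g : W ⟶ X => g ≫ f)

def YonedaBijectiveOn (S : ObjectProperty D) {X Y : D} (f : X ⟶ Y) : Prop :=
  ∀ ⦃W : D⦄, S W → Function.Bijective (fun g : Y ⟶ W => f ≫ g)

lemma nonempty_iso_of_yonedaBijectiveOn {S : ObjectProperty D} {Y Q N : D} {s : Y ⟶ Q}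
    {n : Y ⟶ N} (hs : YonedaBijectiveOn S s) (hn : YonedaBijectiveOn S n) (hQ : S Q)
    (hN : S N) : Nonempty (Q ≅ N) := by
  obtain ⟨q, hq⟩ := (hs hN).2 n
  obtain ⟨p, hp⟩ := (hn hQ).2 s
  exact ⟨⟨q, p, (hs hQ).1 (by simp only [reassoc_of% hq, hp, comp_id]),
    (hn hN).1 (by simp only [reassoc_of% hp, hq, comp_id])⟩⟩

lemma IsSummand.refl (X : D) : IsSummand X X := ⟨𝟙 X, 𝟙 X, comp_id _⟩

lemma IsSummand.trans {X Y Z : D} (h₁ : IsSummand X Y) (h₂ : IsSummand Y Z) :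
    IsSummand X Z := by
  obtain ⟨r₁, k₁, h₁⟩ := h₁
  obtain ⟨r₂, k₂, h₂⟩ := h₂
  exact ⟨r₁ ≫ r₂, k₂ ≫ k₁, by simp [reassoc_of% h₂, h₁]⟩

lemma IsSummand.of_iso {X Y : D} (e : X ≅ Y) : IsSummand Y X := ⟨e.inv, e.hom, e.inv_hom_id⟩

lemma IsSummand.map {E : Type*} [Category E] (F : D ⥤ E) {X Y : D} (h : IsSummand X Y) :
    IsSummand (F.obj X) (F.obj Y) := by
  obtain ⟨r, k, h⟩ := h
  exact ⟨F.map r, F.map k, by rw [← F.map_comp, h, F.map_id]⟩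

lemma IsSummand.biprod [Preadditive D] [HasBinaryBiproducts D] {X₁ X₂ Y₁ Y₂ : D}
    (h₁ : IsSummand X₁ Y₁) (h₂ : IsSummand X₂ Y₂) : IsSummand (X₁ ⊞ X₂) (Y₁ ⊞ Y₂) := by
  obtain ⟨r₁, k₁, h₁⟩ := h₁
  obtain ⟨r₂, k₂, h₂⟩ := h₂
  exact ⟨biprod.map r₁ r₂, biprod.map k₁ k₂, by ext <;> simp [h₁, h₂]⟩

lemma isSummand_of_sq_eq_zero [Preadditive D] {X Y : D} (ρ : X ⟶ Y) (κ : Y ⟶ X)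
    (h : (ρ ≫ κ - 𝟙 X) ≫ (ρ ≫ κ - 𝟙 X) = 0) : IsSummand X Y := by
  set d := ρ ≫ κ - 𝟙 X
  refine ⟨ρ, κ ≫ (𝟙 X - d), ?_⟩
  calc ρ ≫ κ ≫ (𝟙 X - d) = (𝟙 X + d) ≫ (𝟙 X - d) := by rw [← assoc, add_sub_cancel]
    _ = 𝟙 X - d ≫ d := by
      simp only [Preadditive.add_comp, Preadditive.comp_sub, id_comp, comp_id]
      abel
    _ = 𝟙 X := by rw [h, sub_zero]

lemma angle_subset_of_subset_angle [Preadditive D] [HasShift D ℤ] [HasBinaryBiproducts D]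
    {S S' : Set D} (h : S' ⊆ angle S) : angle S' ⊆ angle S := by
  intro X (hX : angleMem S' X)
  induction hX with
  | of hX => exact h hX
  | zero hX => exact .zero hX
  | shift n _ ih => exact .shift n ih
  | sum _ _ ih₁ ih₂ => exact .sum ih₁ ih₂
  | smd h _ ih => exact .smd h ih
  | iso e _ ih => exact .iso e ih

variable [HasShift D ℤ] {S : ObjectProperty D} [S.IsStableUnderShift ℤ]

lemma CoyonedaBijectiveOn.shift {X Y : D} {f : X ⟶ Y} (hf : CoyonedaBijectiveOn S f) (n : ℤ) :
    CoyonedaBijectiveOn S (f⟦n⟧') := by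
  intro W hW
  let adj := (shiftEquiv D n).symm.toAdjunction
  have key : (fun g : W ⟶ X⟦n⟧ => g ≫ f⟦n⟧') =
      adj.homEquiv W Y ∘ (fun g => g ≫ f) ∘ (adj.homEquiv W X).symm := by
    funext g
    exact ((adj.homEquiv_naturality_right _ f).trans
      (congrArg (· ≫ _) ((adj.homEquiv W X).apply_symm_apply g))).symm
  rw [key]
  exact (adj.homEquiv _ _).bijective.comp
    ((hf (S.le_shift (-n) W hW)).comp (adj.homEquiv _ _).symm.bijective)

lemma YonedaBijectiveOn.shift {X Y : D} {f : X ⟶ Y} (hf : YonedaBijectiveOn S f) (n : ℤ) :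
    YonedaBijectiveOn S (f⟦n⟧') := by
  intro W hW
  let adj := (shiftEquiv D n).toAdjunction
  have key : (fun g : Y⟦n⟧ ⟶ W => f⟦n⟧' ≫ g) =
      (adj.homEquiv X W).symm ∘ (fun g => f ≫ g) ∘ adj.homEquiv Y W := by
    funext g
    exact (adj.homEquiv X W).eq_symm_apply.2 (adj.homEquiv_naturality_left f g)
  rw [key]
  exact (adj.homEquiv _ _).symm.bijective.comp
    ((hf (S.le_shift (-n) W hW)).comp (adj.homEquiv _ _).bijective)

end Category

section Pretriangulated

variable {D : Type*} [Category D] [Preadditive D] [HasZeroObject D] [HasShift D ℤ]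
  [∀ n : ℤ, (shiftFunctor D n).Additive] [Pretriangulated D]

lemma comp_self_eq_zero_of_mor₁_comp_of_comp_mor₂ {T : Triangle D} (hT : T ∈ distTriang D)
    {e : T.obj₂ ⟶ T.obj₂} (h₁ : T.mor₁ ≫ e = 0) (h₂ : e ≫ T.mor₂ = 0) : e ≫ e = 0 := by
  obtain ⟨a, ha⟩ := Triangle.coyoneda_exact₂ _ hT e h₂
  obtain ⟨b, hb⟩ := Triangle.yoneda_exact₂ _ hT e h₁
  calc e ≫ e = (a ≫ T.mor₁) ≫ (T.mor₂ ≫ b) := by rw [← ha, ← hb]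
    _ = 0 := by rw [assoc, comp_distTriang_mor_zero₁₂_assoc _ hT, zero_comp, comp_zero]

section FiveLemma

variable {T₁ T₂ : Triangle D} (hT₁ : T₁ ∈ distTriang D) (hT₂ : T₂ ∈ distTriang D)
  (φ : T₁ ⟶ T₂) {W : D}

include hT₁ hT₂

lemma injective_comp_hom₃
    (h₁ : Function.Surjective (fun g : W ⟶ T₁.obj₁ => g ≫ φ.hom₁))
    (h₂ : Function.Injective (fun g : W ⟶ T₁.obj₂ => g ≫ φ.hom₂))
    (h₁' : Function.Injective (fun g : W ⟶ T₁.obj₁⟦(1 : ℤ)⟧ => g ≫ φ.hom₁⟦(1 : ℤ)⟧')) :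
    Function.Injective (fun g : W ⟶ T₁.obj₃ => g ≫ φ.hom₃) := by
  refine (injective_iff_map_eq_zero (Preadditive.rightComp W φ.hom₃)).2
    fun y (hy : y ≫ φ.hom₃ = 0) => ?_
  have hy₃ : y ≫ T₁.mor₃ = 0 := h₁' (by simp only [assoc, φ.comm₃, reassoc_of% hy, zero_comp])
  obtain ⟨x, rfl⟩ := Triangle.coyoneda_exact₃ _ hT₁ y hy₃
  have hx : (x ≫ φ.hom₂) ≫ T₂.mor₂ = 0 := by rw [assoc, ← φ.comm₂, ← assoc, hy]
  obtain ⟨w, hw⟩ := Triangle.coyoneda_exact₂ _ hT₂ _ hx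
  obtain ⟨w, rfl⟩ := h₁ w
  obtain rfl : x = w ≫ T₁.mor₁ := h₂ (by simp only [hw, assoc, φ.comm₁])
  simp only [assoc, comp_distTriang_mor_zero₁₂ _ hT₁, comp_zero]

lemma surjective_comp_hom₂
    (h₁ : Function.Surjective (fun g : W ⟶ T₁.obj₁ => g ≫ φ.hom₁))
    (h₃ : Function.Surjective (fun g : W ⟶ T₁.obj₃ => g ≫ φ.hom₃))
    (h₁' : Function.Injective (fun g : W ⟶ T₁.obj₁⟦(1 : ℤ)⟧ => g ≫ φ.hom₁⟦(1 : ℤ)⟧')) :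
    Function.Surjective (fun g : W ⟶ T₁.obj₂ => g ≫ φ.hom₂) := by
  intro y
  obtain ⟨z, hz : z ≫ φ.hom₃ = y ≫ T₂.mor₂⟩ := h₃ (y ≫ T₂.mor₂)
  have hz₀ : z ≫ T₁.mor₃ = 0 := h₁' (by
    simp only [assoc, φ.comm₃, reassoc_of% hz, comp_distTriang_mor_zero₂₃ _ hT₂, comp_zero,
      zero_comp])
  obtain ⟨y₁, rfl⟩ := Triangle.coyoneda_exact₃ _ hT₁ z hz₀
  have : (y - y₁ ≫ φ.hom₂) ≫ T₂.mor₂ = 0 := by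
    rw [Preadditive.sub_comp, assoc, ← φ.comm₂, ← assoc, hz, sub_self]
  obtain ⟨x, hx⟩ := Triangle.coyoneda_exact₂ _ hT₂ _ this
  obtain ⟨x, rfl⟩ := h₁ x
  refine ⟨y₁ + x ≫ T₁.mor₁, ?_⟩
  change (y₁ + x ≫ T₁.mor₁) ≫ φ.hom₂ = y
  rw [Preadditive.add_comp, assoc, φ.comm₁, ← assoc, ← hx]
  abel

lemma injective_hom₂_comp
    (h₁ : Function.Injective (fun g : T₂.obj₁ ⟶ W => φ.hom₁ ≫ g))
    (h₃ : Function.Injective (fun g : T₂.obj₃ ⟶ W => φ.hom₃ ≫ g))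
    (h₁' : Function.Surjective (fun g : T₂.obj₁⟦(1 : ℤ)⟧ ⟶ W => φ.hom₁⟦(1 : ℤ)⟧' ≫ g)) :
    Function.Injective (fun g : T₂.obj₂ ⟶ W => φ.hom₂ ≫ g) := by
  refine (injective_iff_map_eq_zero (Preadditive.leftComp W φ.hom₂)).2
    fun y (hy : φ.hom₂ ≫ y = 0) => ?_
  have hy₁ : T₂.mor₁ ≫ y = 0 :=
    h₁ (by dsimp only; rw [← assoc, ← φ.comm₁, assoc, hy, comp_zero, comp_zero])
  obtain ⟨z, rfl⟩ := Triangle.yoneda_exact₂ _ hT₂ y hy₁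
  have hz : T₁.mor₂ ≫ (φ.hom₃ ≫ z) = 0 := by rw [← assoc, φ.comm₂, assoc, hy]
  obtain ⟨g, hg⟩ := Triangle.yoneda_exact₃ _ hT₁ _ hz
  obtain ⟨g, rfl⟩ := h₁' g
  obtain rfl : z = T₂.mor₃ ≫ g := h₃ (by simp only [hg, ← assoc, φ.comm₃])
  simp only [comp_distTriang_mor_zero₂₃_assoc _ hT₂, zero_comp]

lemma surjective_hom₃_comp
    (h₁ : Function.Injective (fun g : T₂.obj₁ ⟶ W => φ.hom₁ ≫ g))
    (h₂ : Function.Surjective (fun g : T₂.obj₂ ⟶ W => φ.hom₂ ≫ g))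
    (h₁' : Function.Surjective (fun g : T₂.obj₁⟦(1 : ℤ)⟧ ⟶ W => φ.hom₁⟦(1 : ℤ)⟧' ≫ g)) :
    Function.Surjective (fun g : T₂.obj₃ ⟶ W => φ.hom₃ ≫ g) := by
  intro y
  obtain ⟨v, hv : φ.hom₂ ≫ v = T₁.mor₂ ≫ y⟩ := h₂ (T₁.mor₂ ≫ y)
  have hv₀ : T₂.mor₁ ≫ v = 0 := h₁ (by
    simp only [← assoc, ← φ.comm₁]
    simp only [assoc, hv, comp_distTriang_mor_zero₁₂_assoc _ hT₁, zero_comp, comp_zero])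
  obtain ⟨z, rfl⟩ := Triangle.yoneda_exact₂ _ hT₂ v hv₀
  have : T₁.mor₂ ≫ (y - φ.hom₃ ≫ z) = 0 := by
    rw [Preadditive.comp_sub, ← assoc, φ.comm₂, assoc, hv, sub_self]
  obtain ⟨u, hu⟩ := Triangle.yoneda_exact₃ _ hT₁ _ this
  obtain ⟨u, rfl⟩ := h₁' u
  refine ⟨z + T₂.mor₃ ≫ u, ?_⟩
  change φ.hom₃ ≫ (z + T₂.mor₃ ≫ u) = y
  rw [Preadditive.comp_add, ← assoc, ← φ.comm₃, assoc, ← hu]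
  abel

end FiveLemma

variable {S : ObjectProperty D} [S.IsStableUnderShift ℤ]

lemma CoyonedaBijectiveOn.hom₂ {T₁ T₂ : Triangle D} (hT₁ : T₁ ∈ distTriang D)
    (hT₂ : T₂ ∈ distTriang D) (φ : T₁ ⟶ T₂) (h₁ : CoyonedaBijectiveOn S φ.hom₁)
    (h₃ : CoyonedaBijectiveOn S φ.hom₃) : CoyonedaBijectiveOn S φ.hom₂ := fun _ hW =>
  -- injectivity is read off the inverse rotations, where `φ.hom₂` is the third component
  ⟨injective_comp_hom₃ (inv_rot_of_distTriang _ hT₁) (inv_rot_of_distTriang _ hT₂)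
      ((invRotate D).map φ) (h₃.shift (-1) hW).2 (h₁ hW).1 ((h₃.shift (-1)).shift 1 hW).1,
    surjective_comp_hom₂ hT₁ hT₂ φ (h₁ hW).2 (h₃ hW).2 (h₁.shift 1 hW).1⟩

lemma YonedaBijectiveOn.hom₂ {T₁ T₂ : Triangle D} (hT₁ : T₁ ∈ distTriang D)
    (hT₂ : T₂ ∈ distTriang D) (φ : T₁ ⟶ T₂) (h₁ : YonedaBijectiveOn S φ.hom₁)
    (h₃ : YonedaBijectiveOn S φ.hom₃) : YonedaBijectiveOn S φ.hom₂ := fun _ hW =>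
  ⟨injective_hom₂_comp hT₁ hT₂ φ (h₁ hW).1 (h₃ hW).1 (h₁.shift 1 hW).2,
    surjective_hom₃_comp (inv_rot_of_distTriang _ hT₁) (inv_rot_of_distTriang _ hT₂)
      ((invRotate D).map φ) (h₃.shift (-1) hW).1 (h₁ hW).2 ((h₃.shift (-1)).shift 1 hW).2⟩

lemma coyonedaBijectiveOn_mor₁ {T : Triangle D} (hT : T ∈ distTriang D)
    (h₃ : S.rightOrthogonal T.obj₃) : CoyonedaBijectiveOn S T.mor₁ := by
  intro W hW
  refine ⟨(injective_iff_map_eq_zero (Preadditive.rightComp W T.mor₁)).2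
    fun g (hg : g ≫ T.mor₁ = 0) => ?_, fun y => ?_⟩
  · obtain ⟨f, rfl⟩ := Triangle.coyoneda_exact₂ _ (inv_rot_of_distTriang _ hT) g hg
    exact (congrArg (· ≫ _) (S.rightOrthogonal.le_shift (-1) _ h₃ f hW)).trans zero_comp
  · obtain ⟨g, hg⟩ := Triangle.coyoneda_exact₂ _ hT y (h₃ _ hW)
    exact ⟨g, hg.symm⟩

lemma yonedaBijectiveOn_mor₂ {T : Triangle D} (hT : T ∈ distTriang D)
    (h₁ : S.leftOrthogonal T.obj₁) : YonedaBijectiveOn S T.mor₂ := by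
  intro W hW
  refine ⟨(injective_iff_map_eq_zero (Preadditive.leftComp W T.mor₂)).2
    fun g (hg : T.mor₂ ≫ g = 0) => ?_, fun y => ?_⟩
  · obtain ⟨f, rfl⟩ := Triangle.yoneda_exact₃ _ hT g hg
    rw [S.leftOrthogonal.le_shift 1 _ h₁ f hW, comp_zero]
  · obtain ⟨g, hg⟩ := Triangle.yoneda_exact₂ _ hT y (h₁ _ hW)
    exact ⟨g, hg.symm⟩

lemma rightOrthogonal_obj₃_of_coyonedaBijectiveOn {T : Triangle D} (hT : T ∈ distTriang D)
    (h : CoyonedaBijectiveOn S T.mor₁) : S.rightOrthogonal T.obj₃ := by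
  intro W f hW
  have hf : f ≫ T.mor₃ = 0 := ((h.shift 1) hW).1 (by
    simp only [assoc, comp_distTriang_mor_zero₃₁ _ hT, comp_zero, zero_comp])
  obtain ⟨g, rfl⟩ := Triangle.coyoneda_exact₃ _ hT f hf
  obtain ⟨g, rfl⟩ := (h hW).2 g
  simp [comp_distTriang_mor_zero₁₂ _ hT]

section Semiorthogonal

variable {I J : Set D}

lemma IsThickTriangulatedSub.isStableUnderShift {S : Set D} (hS : IsThickTriangulatedSub S) :
    ObjectProperty.IsStableUnderShift (· ∈ S) ℤ :=
  ⟨fun n => ⟨fun X hX => hS.shift X n hX⟩⟩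

lemma mem_star_of_mem_left (hI : IsThickTriangulatedSub I) {X : D} (hX : X ∈ J) :
    X ∈ star J I :=
  ⟨X, 0, 𝟙 X, 0, 0, contractible_distinguished X, hX, hI.zero 0 (isZero_zero D)⟩

lemma mem_star_of_mem_right (hJ : IsThickTriangulatedSub J) {X : D} (hX : X ∈ I) :
    X ∈ star J I :=
  ⟨0, X, 0, 𝟙 X, 0, contractible_distinguished₁ X, hJ.zero 0 (isZero_zero D), hX⟩

lemma shift_mem_star (hI : IsThickTriangulatedSub I) (hJ : IsThickTriangulatedSub J) {X : D}
    (hX : X ∈ star J I) (n : ℤ) : X⟦n⟧ ∈ star J I := by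
  obtain ⟨A, B, a, b, c, hT, hA, hB⟩ := hX
  let T := (shiftFunctor (Triangle D) n).obj (Triangle.mk a b c)
  exact ⟨A⟦n⟧, B⟦n⟧, T.mor₁, T.mor₂, T.mor₃, Triangle.shift_distinguished _ hT n,
    hJ.shift _ n hA, hI.shift _ n hB⟩

variable (hI : IsThickTriangulatedSub I) (hJ : IsThickTriangulatedSub J)
  (horth : ∀ (K L : D), K ∈ J → L ∈ I → ∀ f : K ⟶ L, f = 0)

include hI hJ horth

lemma mem_star_of_coyonedaBijectiveOn_of_yonedaBijectiveOn {Y M N : D} (hM : M ∈ J)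
    {m : M ⟶ Y} (hm : CoyonedaBijectiveOn (· ∈ J) m) (hN : N ∈ I) {n : Y ⟶ N}
    (hn : YonedaBijectiveOn (ObjectProperty.rightOrthogonal (· ∈ J)) n) : Y ∈ star J I := by
  have := hJ.isStableUnderShift
  obtain ⟨Q, s, t, hQ⟩ := distinguished_cocone_triangle m
  obtain ⟨e⟩ := nonempty_iso_of_yonedaBijectiveOn
    (yonedaBijectiveOn_mor₂ hQ fun V f hV => hV f hM) hn
    (rightOrthogonal_obj₃_of_coyonedaBijectiveOn hQ hm) fun K f hK => horth K N hK hN f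
  exact ⟨M, Q, m, s, t, hQ, hM, hI.iso_closed e.symm hN⟩

variable {T : Triangle D} (hT : T ∈ distTriang D) (h₁ : T.obj₁ ∈ star J I)
  (h₃ : T.obj₃ ∈ star J I)

include hT h₁ h₃

lemma exists_coyonedaBijectiveOn_of_distTriang :
    ∃ (M : D) (m : M ⟶ T.obj₂), M ∈ J ∧ CoyonedaBijectiveOn (· ∈ J) m := by
  have := hJ.isStableUnderShift
  obtain ⟨A, B, a, b, c, hX, hA, hB⟩ := h₁
  obtain ⟨A', B', a', b', c', hZ, hA', hB'⟩ := h₃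
  -- `a' ≫ T.mor₃` lifts along `a⟦1⟧'`: its composite with `b⟦1⟧'` is a map from `J` to `I`
  obtain ⟨ε, hε⟩ : ∃ ε : A' ⟶ A⟦(1 : ℤ)⟧, a' ≫ T.mor₃ = ε ≫ (-(a⟦(1 : ℤ)⟧')) :=
    Triangle.coyoneda_exact₁ _ (rot_of_distTriang _ hX) (a' ≫ T.mor₃)
      (horth _ _ hA' (hI.shift B 1 hB) _)
  have hε' : (-ε) ≫ a⟦(1 : ℤ)⟧' = a' ≫ T.mor₃ := by
    rw [hε, Preadditive.comp_neg, Preadditive.neg_comp]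
  obtain ⟨M, p, q, hM⟩ := distinguished_cocone_triangle₂ (-ε)
  obtain ⟨m, hm₁, hm₂⟩ := complete_distinguished_triangle_morphism₂ _ T hM hT a a' hε'
  refine ⟨M, m, hJ.ext₂ _ hM hA hA',
    CoyonedaBijectiveOn.hom₂ hM hT ⟨a, m, a', hm₁, hm₂, hε'⟩ ?_ ?_⟩
  · exact coyonedaBijectiveOn_mor₁ hX fun K f hK => horth K B hK hB f
  · exact coyonedaBijectiveOn_mor₁ hZ fun K f hK => horth K B' hK hB' f

lemma exists_yonedaBijectiveOn_of_distTriang :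
    ∃ (N : D) (n : T.obj₂ ⟶ N),
      N ∈ I ∧ YonedaBijectiveOn (ObjectProperty.rightOrthogonal (· ∈ J)) n := by
  have := hJ.isStableUnderShift
  obtain ⟨A, B, a, b, c, hX, hA, hB⟩ := h₁
  obtain ⟨A', B', a', b', c', hZ, hA', hB'⟩ := h₃
  obtain ⟨θ, hθ⟩ := Triangle.yoneda_exact₂ _ hZ (T.mor₃ ≫ b⟦(1 : ℤ)⟧')
    ((assoc _ _ _).symm.trans (horth _ _ hA' (hI.shift B 1 hB) _))
  obtain ⟨N, f, g, hN⟩ := distinguished_cocone_triangle₂ θ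
  obtain ⟨n, hn₁, hn₂⟩ := complete_distinguished_triangle_morphism₂ T _ hT hN b b' hθ
  refine ⟨N, n, hI.ext₂ _ hN hB hB',
    YonedaBijectiveOn.hom₂ hT hN ⟨b, n, b', hn₁, hn₂, hθ⟩ ?_ ?_⟩
  · exact yonedaBijectiveOn_mor₂ hX fun V f hV => hV f hA
  · exact yonedaBijectiveOn_mor₂ hZ fun V f hV => hV f hA'

lemma mem_star_of_distTriang : T.obj₂ ∈ star J I := by
  obtain ⟨M, m, hM, hm⟩ := exists_coyonedaBijectiveOn_of_distTriang hI hJ horth hT h₁ h₃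
  obtain ⟨N, n, hN, hn⟩ := exists_yonedaBijectiveOn_of_distTriang hI hJ horth hT h₁ h₃
  exact mem_star_of_coyonedaBijectiveOn_of_yonedaBijectiveOn hI hJ horth hM hm hN hn

end Semiorthogonal

end Pretriangulated

section Angle

variable {S : Set C} (hS₀ : ∀ X : C, IsZero X → X ∈ S)
  (hS_shift : ∀ (X : C) (n : ℤ), X ∈ S → X⟦n⟧ ∈ S)
  (hS_ext : ∀ T ∈ distTriang C, T.obj₁ ∈ S → T.obj₃ ∈ S → T.obj₂ ∈ S)

include hS₀ hS_shift hS_ext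

lemma exists_isSummand_of_mem_angle {X : C} (hX : X ∈ angle S) : ∃ W ∈ S, IsSummand X W := by
  induction (hX : angleMem S X) with
  | of hX => exact ⟨_, hX, .refl _⟩
  | zero hX => exact ⟨_, hS₀ _ hX, .refl _⟩
  | shift n _ ih =>
    obtain ⟨W, hW, h⟩ := ih
    exact ⟨W⟦n⟧, hS_shift W n hW, h.map (shiftFunctor C n)⟩
  | sum _ _ ih₁ ih₂ =>
    obtain ⟨W₁, hW₁, h₁⟩ := ih₁
    obtain ⟨W₂, hW₂, h₂⟩ := ih₂
    exact ⟨W₁ ⊞ W₂, hS_ext _ (binaryBiproductTriangle_distinguished W₁ W₂) hW₁ hW₂, h₁.biprod h₂⟩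
  | smd h _ ih =>
    obtain ⟨W, hW, h'⟩ := ih
    exact ⟨W, hW, h.trans h'⟩
  | iso e _ ih =>
    obtain ⟨W, hW, h⟩ := ih
    exact ⟨W, hW, (IsSummand.of_iso e).trans h⟩

lemma mem_angle_of_distTriang {T : Triangle C} (hT : T ∈ distTriang C) (h₁ : T.obj₁ ∈ angle S)
    (h₃ : T.obj₃ ∈ angle S) : T.obj₂ ∈ angle S := by
  obtain ⟨W₁, hW₁, r₁, k₁, hrk₁⟩ := exists_isSummand_of_mem_angle hS₀ hS_shift hS_ext h₁
  obtain ⟨W₃, hW₃, r₃, k₃, hrk₃⟩ := exists_isSummand_of_mem_angle hS₀ hS_shift hS_ext h₃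
  obtain ⟨E, f, g, hE⟩ := distinguished_cocone_triangle₂ (k₃ ≫ T.mor₃ ≫ r₁⟦(1 : ℤ)⟧')
  have hr : T.mor₃ ≫ r₁⟦(1 : ℤ)⟧' = r₃ ≫ k₃ ≫ T.mor₃ ≫ r₁⟦(1 : ℤ)⟧' := by
    rw [reassoc_of% hrk₃]
  have hk : (k₃ ≫ T.mor₃ ≫ r₁⟦(1 : ℤ)⟧') ≫ k₁⟦(1 : ℤ)⟧' = k₃ ≫ T.mor₃ := by
    rw [assoc, assoc, ← Functor.map_comp, hrk₁, CategoryTheory.Functor.map_id, comp_id]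
  obtain ⟨ρ, hρ₁, hρ₂⟩ : ∃ ρ : T.obj₂ ⟶ E, T.mor₁ ≫ ρ = r₁ ≫ f ∧ T.mor₂ ≫ r₃ = ρ ≫ g :=
    complete_distinguished_triangle_morphism₂ T _ hT hE r₁ r₃ hr
  obtain ⟨κ, hκ₁, hκ₂⟩ : ∃ κ : E ⟶ T.obj₂, f ≫ κ = k₁ ≫ T.mor₁ ∧ g ≫ k₃ = κ ≫ T.mor₂ :=
    complete_distinguished_triangle_morphism₂ _ T hE hT k₁ k₃ hk
  -- `ρ ≫ κ` induces the identity on `T.obj₁` and `T.obj₃`, so `ρ ≫ κ - 𝟙` squares to zero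
  refine .smd (isSummand_of_sq_eq_zero ρ κ (comp_self_eq_zero_of_mor₁_comp_of_comp_mor₂ hT ?_ ?_))
    (.of (hS_ext _ hE hW₁ hW₃))
  · rw [Preadditive.comp_sub, reassoc_of% hρ₁, hκ₁, reassoc_of% hrk₁, comp_id, sub_self]
  · rw [Preadditive.sub_comp, assoc, ← hκ₂, ← reassoc_of% hρ₂, hrk₃, comp_id, id_comp, sub_self]

end Angle

lemma angleN_subset_angle {G S : Set C} (hG : G ⊆ angle S)
    (hext : ∀ T ∈ distTriang C, T.obj₁ ∈ angle S → T.obj₃ ∈ angle S → T.obj₂ ∈ angle S) :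
    ∀ n, angleN G n ⊆ angle S
  | 0 => by simp [angleN]
  | 1 => angle_subset_of_subset_angle hG
  | n + 2 => angle_subset_of_subset_angle <| by
    rintro Y ⟨K₀, K₁, f, g, h, hT, h₀, h₁⟩
    exact hext _ hT (angleN_subset_angle hG hext (n + 1) h₀) (angle_subset_of_subset_angle hG h₁)

/-- Let `ℐ` and `𝒥` be thick full triangulated subcategories with
`𝒯 = ⟨ℐ ∪ 𝒥⟩_∞` and `Hom(K, L) = 0` for every `K ∈ 𝒥` and `L ∈ ℐ`.
Then `𝒯 = ⟨𝒥 * ℐ⟩`. -/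
theorem eq_angle_star_of_semiorthogonal (I J : Set C)
    (hI : IsThickTriangulatedSub I) (hJ : IsThickTriangulatedSub J)
    (hgen : angleInf (I ∪ J) = Set.univ)
    (horth : ∀ (K L : C), K ∈ J → L ∈ I → ∀ f : K ⟶ L, f = 0) :
    angle (star J I) = Set.univ := by
  have hext : ∀ T ∈ distTriang C, T.obj₁ ∈ angle (star J I) → T.obj₃ ∈ angle (star J I) →
      T.obj₂ ∈ angle (star J I) := fun T hT =>
    mem_angle_of_distTriang (fun X hX => mem_star_of_mem_left hI (hJ.zero X hX))
      (fun X n hX => shift_mem_star hI hJ hX n) (fun _ => mem_star_of_distTriang hI hJ horth) hT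
  have hIJ : I ∪ J ⊆ angle (star J I) := by
    rintro X (hX | hX)
    exacts [.of (mem_star_of_mem_right hJ hX), .of (mem_star_of_mem_left hI hX)]
  refine Set.eq_univ_of_forall fun X => ?_
  obtain ⟨n, hn⟩ := Set.mem_iUnion.mp (hgen ▸ Set.mem_univ X : X ∈ angleInf (I ∪ J))
  exact angleN_subset_angle hIJ hext n hn

end RouquierDim
end

section
/- Let R be an algebra of finite type over a field k and let M be a finitely generated R-module. Let 𝔭 be an associated prime of M with dim(R/𝔭) = dim_R M. Suppose f ∈ R satisfies f ∉ 𝔭 and f ∈ 𝔮 for every associated prime 𝔮 of M with 𝔮 ≠ 𝔭. Then dim_R M = dim_{R_f} M_f. -/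
/-!
For a finitely generated domain `D` over a field, Noether normalization makes `D` integral over a
polynomial ring in `trdeg D` variables, so `dim D = trdeg D`; as `D[1/a]` is algebraic over `D`,
inverting `a ≠ 0` does not change the dimension.

Since `(Ann M) R_f ⊆ Ann M_f`, the primes of `R_f ⧸ Ann M_f` embed into those of `R ⧸ Ann M`,
so `dim R_f ⧸ Ann M_f ≤ dim R ⧸ Ann M`. Conversely `𝔭 R_f` is an associated prime of `M_f`, so
it contains `Ann M_f`, and `(R ⧸ 𝔭)_f` is a quotient of `R_f ⧸ Ann M_f`; hence
`dim R ⧸ Ann M = dim R ⧸ 𝔭 = dim (R ⧸ 𝔭)_f ≤ dim R_f ⧸ Ann M_f`.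
-/

section IntegralExtension

variable {A B : Type*} [CommRing A] [CommRing B] [Algebra A B] [Algebra.IsIntegral A B]

theorem ringKrullDim_le_of_isIntegral : ringKrullDim B ≤ ringKrullDim A :=
  Order.krullDim_le_of_strictMono (PrimeSpectrum.comap (algebraMap A B)) fun _ _ h ↦
    Ideal.IsIntegral.comap_lt_comap (R := A) h

theorem le_ringKrullDim_of_isIntegral [FaithfulSMul A B] :
    ringKrullDim A ≤ ringKrullDim B := by
  refine iSup_le fun l ↦ ?_
  obtain ⟨Q, -, hQ, hQl⟩ :=
    Ideal.exists_ideal_over_prime_of_isIntegral l.head.asIdeal (⊥ : Ideal B)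
      (Ideal.comap_bot_le_of_injective _ (FaithfulSMul.algebraMap_injective A B))
  have : Q.LiesOver l.head.asIdeal := ⟨hQl.symm⟩
  obtain ⟨L, hL, -⟩ := Ideal.exists_ltSeries_of_hasGoingUp l Q
  exact hL ▸ Order.LTSeries.length_le_krullDim L

theorem ringKrullDim_eq_of_isIntegral [FaithfulSMul A B] : ringKrullDim B = ringKrullDim A :=
  ringKrullDim_le_of_isIntegral.antisymm le_ringKrullDim_of_isIntegral

end IntegralExtension

theorem ringKrullDim_le_of_comap_injective {A B : Type*} [CommRing A] [CommRing B] (φ : A →+* B)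
    (hφ : Function.Injective (PrimeSpectrum.comap φ)) : ringKrullDim B ≤ ringKrullDim A :=
  Order.krullDim_le_of_strictMono _ <| Monotone.strictMono_of_injective
    (fun _ _ h ↦ Ideal.comap_mono (f := φ) h) hφ

section FiniteTypeDomain

open Algebra Cardinal

variable (k : Type*) {D : Type*} [Field k] [CommRing D] [IsDomain D] [Algebra k D]
  [Algebra.FiniteType k D]

theorem Algebra.FiniteType.ringKrullDim_eq_trdeg : ringKrullDim D = (trdeg k D).toNat := by
  obtain ⟨s, g, hg, hint⟩ := exists_integral_inj_algHom_of_fg k D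
  let P := MvPolynomial (Fin s) k
  let _ : Algebra P D := g.toRingHom.toAlgebra
  have : IsScalarTower k P D := IsScalarTower.of_algebraMap_eq fun x ↦ (g.commutes x).symm
  have : Algebra.IsIntegral P D := ⟨hint⟩
  have : FaithfulSMul P D := (faithfulSMul_iff_algebraMap_injective P D).mpr hg
  have htrdeg : trdeg k D = s := by
    have := lift_trdeg_add_eq k P D
    rw [MvPolynomial.trdeg_of_isDomain, trdeg_eq_zero, lift_zero, add_zero] at this
    simpa using this.symm
  rw [ringKrullDim_eq_of_isIntegral (A := P), MvPolynomial.ringKrullDim_of_isNoetherianRing,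
    ringKrullDim_eq_zero_of_field, htrdeg]
  simp

theorem Algebra.FiniteType.ringKrullDim_eq_of_isAlgebraic (L : Type*) [CommRing L] [IsDomain L]
    [Algebra k L] [Algebra.FiniteType k L] [Algebra D L] [IsScalarTower k D L] [FaithfulSMul D L]
    [Algebra.IsAlgebraic D L] : ringKrullDim L = ringKrullDim D := by
  have := lift_trdeg_add_eq k D L
  rw [trdeg_eq_zero (R := D), lift_zero, add_zero] at this
  rw [ringKrullDim_eq_trdeg k, ringKrullDim_eq_trdeg k, ← toNat_lift, ← this, toNat_lift]

end FiniteTypeDomain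

theorem Algebra.FiniteType.ringKrullDim_away (k : Type*) {D : Type*} [Field k] [CommRing D]
    [IsDomain D] [Algebra k D] [Algebra.FiniteType k D] {a : D} (ha : a ≠ 0) :
    ringKrullDim (Localization.Away a) = ringKrullDim D := by
  have hle := powers_le_nonZeroDivisors_of_noZeroDivisors ha
  have : IsDomain (Localization.Away a) := IsLocalization.isDomain_localization hle
  have : FaithfulSMul D (Localization.Away a) :=
    (faithfulSMul_iff_algebraMap_injective _ _).mpr (IsLocalization.injective _ hle)
  have : Algebra.IsAlgebraic D (Localization.Away a) :=
    IsLocalization.isAlgebraic _ (Submonoid.powers a)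
  exact ringKrullDim_eq_of_isAlgebraic k _

theorem ringKrullDim_quotient_le_of_isLocalization {R R' : Type*} [CommRing R] [CommRing R']
    [Algebra R R'] (S : Submonoid R) [IsLocalization S R'] {I : Ideal R} {J : Ideal R'}
    (h : I ≤ J.comap (algebraMap R R')) : ringKrullDim (R' ⧸ J) ≤ ringKrullDim (R ⧸ I) := by
  apply ringKrullDim_le_of_comap_injective (Ideal.quotientMap J (algebraMap R R') h)
  have hcomp : PrimeSpectrum.comap (Ideal.Quotient.mk I) ∘
        PrimeSpectrum.comap (Ideal.quotientMap J (algebraMap R R') h) =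
      PrimeSpectrum.comap (algebraMap R R') ∘ PrimeSpectrum.comap (Ideal.Quotient.mk J) := by
    funext x
    simp only [Function.comp_apply, ← PrimeSpectrum.comap_comp_apply, Ideal.quotientMap_comp_mk]
  refine Function.Injective.of_comp (f := PrimeSpectrum.comap (Ideal.Quotient.mk I)) ?_
  rw [hcomp]
  exact (PrimeSpectrum.localization_comap_injective R' S).comp
    (PrimeSpectrum.comap_injective_of_surjective _ Ideal.Quotient.mk_surjective)

section LocalizedModule

variable {R M : Type*} [CommRing R] [AddCommGroup M] [Module R M] (S : Submonoid R)

theorem annihilator_le_comap_annihilator_localizedModule :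
    Module.annihilator R M ≤ (Module.annihilator (Localization S) (LocalizedModule S M)).comap
      (algebraMap R (Localization S)) := by
  intro a ha
  rw [Ideal.mem_comap, Module.mem_annihilator]
  intro x
  induction x using LocalizedModule.induction_on with
  | h m s => rw [algebraMap_smul, LocalizedModule.smul'_mk, Module.mem_annihilator.mp ha,
      LocalizedModule.zero_mk]

theorem annihilator_localizedModule_le_map {p : Ideal R} (hp : p ∈ associatedPrimes R M)
    (hS : Disjoint (S : Set R) p) :
    Module.annihilator (Localization S) (LocalizedModule S M) ≤ p.map (algebraMap R _) := by
  have hpS :=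
    Module.associatedPrimes.mem_associatedPrimes_of_comap_mem_associatedPrimes_of_isLocalizedModule
      S (LocalizedModule.mkLinearMap S M) (p.map (algebraMap R (Localization S)))
      (by rwa [← Ideal.under_def, IsLocalization.under_map_of_isPrime_disjoint S _ hp.isPrime hS])
  simpa [Submodule.annihilator_top] using hpS.annihilator_le

end LocalizedModule

theorem ringKrullDim_away_quotient_le {R : Type*} [CommRing R] (p : Ideal R) (f : R)
    {J : Ideal (Localization.Away f)} (hJ : J ≤ p.map (algebraMap R _)) :
    ringKrullDim (Localization.Away (Ideal.Quotient.mkₐ R p f)) ≤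
      ringKrullDim (Localization.Away f ⧸ J) := by
  let φ := IsLocalization.Away.mapₐ (Localization.Away f)
    (Localization.Away (Ideal.Quotient.mkₐ R p f)) (Ideal.Quotient.mkₐ R p) f
  have hker : J ≤ RingHom.ker φ := by
    refine hJ.trans (Ideal.map_le_iff_le_comap.mpr fun x hx ↦ ?_)
    change φ (algebraMap R _ x) = 0
    rw [φ.commutes, IsScalarTower.algebraMap_apply R (R ⧸ p), Ideal.Quotient.algebraMap_eq,
      Ideal.Quotient.eq_zero_iff_mem.mpr hx, map_zero]
  exact ringKrullDim_le_of_surjective (Ideal.Quotient.lift _ φ.toRingHom hker)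
    (Ideal.Quotient.lift_surjective_of_surjective _ _
      (IsLocalization.Away.mapₐ_surjective_of_surjective f (Ideal.Quotient.mkₐ_surjective R p)))

theorem krullDim_module_eq_krullDim_away_general
    (k R M : Type*) [Field k] [CommRing R] [Algebra k R] [Algebra.FiniteType k R]
    [AddCommGroup M] [Module R M]
    (p : Ideal R) (hp : p ∈ associatedPrimes R M)
    (hdim : ringKrullDim (R ⧸ p) = ringKrullDim (R ⧸ Module.annihilator R M))
    (f : R) (hfp : f ∉ p) :
    ringKrullDim (R ⧸ Module.annihilator R M)
      = ringKrullDim ((Localization.Away f) ⧸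
          Module.annihilator (Localization.Away f)
            (LocalizedModule (Submonoid.powers f) M)) := by
  have hprime : p.IsPrime := hp.isPrime
  have hf_ne : Ideal.Quotient.mk p f ≠ 0 := by rwa [Ne, Ideal.Quotient.eq_zero_iff_mem]
  have hdisj : Disjoint (Submonoid.powers f : Set R) p :=
    (Ideal.disjoint_powers_iff_notMem _ hprime.isRadical).mpr hfp
  refine le_antisymm ?_ (ringKrullDim_quotient_le_of_isLocalization (Submonoid.powers f)
    (annihilator_le_comap_annihilator_localizedModule _))
  calc ringKrullDim (R ⧸ Module.annihilator R M) = ringKrullDim (R ⧸ p) := hdim.symm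
    _ = ringKrullDim (Localization.Away (Ideal.Quotient.mk p f)) :=
      (Algebra.FiniteType.ringKrullDim_away k hf_ne).symm
    _ ≤ _ := ringKrullDim_away_quotient_le p f (annihilator_localizedModule_le_map _ hp hdisj)

/-- Let `R` be an algebra of finite type over a field `k` and `M` a finitely
generated `R`-module. Let `𝔭` be an associated prime of `M` with `dim (R/𝔭) = dim_R M`, and
let `f ∈ R` with `f ∉ 𝔭` and `f ∈ 𝔮` for every associated prime `𝔮 ≠ 𝔭` of `M`. Then
`dim_R M = dim_{R_f} M_f`. -/
theorem krullDim_module_eq_krullDim_away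
    (k R M : Type*) [Field k] [CommRing R] [Algebra k R] [Algebra.FiniteType k R]
    [AddCommGroup M] [Module R M] [Module.Finite R M]
    (p : Ideal R) (hp : p ∈ associatedPrimes R M)
    (hdim : ringKrullDim (R ⧸ p) = ringKrullDim (R ⧸ Module.annihilator R M))
    (f : R) (hfp : f ∉ p)
    (hf : ∀ q ∈ associatedPrimes R M, q ≠ p → f ∈ q) :
    ringKrullDim (R ⧸ Module.annihilator R M)
      = ringKrullDim ((Localization.Away f) ⧸
          Module.annihilator (Localization.Away f)
            (LocalizedModule (Submonoid.powers f) M)) :=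
  krullDim_module_eq_krullDim_away_general k R M p hp hdim f hfp
end

section
/- Let 𝒯 be a ℤ/m-graded triangulated category (1 ≤ m ≤ ∞), R a commutative ring acting centrally on 𝒯, X an object, and M = Hom^•(X, X). If a_1, …, a_n ∈ R is an M-regular sequence, then there is an isomorphism of R-modules Hom^•(X⫽(a_1, …, a_n), X) ≅ M/(a_1, …, a_n)M (in the graded sense, Hom^•(X⫽(a_1, …, a_n), X) ≅ (M/(a_1, …, a_n)M)[−n]). -/
open CategoryTheory Category Limits Pretriangulated DirectSum

universe v u

namespace RouquierDim

variable {C : Type u} [Category.{v} C] [Preadditive C] [HasZeroObject C]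
  [HasShift C ℤ] [∀ n : ℤ, (shiftFunctor C n).Additive] [Pretriangulated C]
  [HasBinaryBiproducts C]

/-- `G` is a split-generator of the triangulated category `C`:
`C = ⟨G⟩_n` for some `n ∈ ℕ`. -/
def IsSplitGenerator (G : C) : Prop := ∃ n : ℕ, angleN {G} n = Set.univ

/-- A central action of a commutative ring `R` on the (`ℤ/m`-graded) triangulated
category `C`: a ring homomorphism `φ K : R →+* End K` for every object `K`, natural in `K`
and compatible with the shift. -/
structure CentralAction (R : Type*) [CommRing R] where
  φ : ∀ K : C, R →+* End K
  natural : ∀ {K L : C} (f : K ⟶ L) (r : R), φ K r ≫ f = f ≫ φ L r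
  shift_comm : ∀ (K : C) (r : R) (n : ℤ), φ (K⟦n⟧) r = (φ K r)⟦n⟧'

variable {R : Type*} [CommRing R]

/-- The `R`-module structure on `Hom(X, Y)` induced by a central action:
`r • f = f ≫ φ Y r` (equivalently, `φ X r ≫ f`, by naturality). -/
def CentralAction.homModule (A : CentralAction (C := C) R) (X Y : C) :
    Module R (X ⟶ Y) :=
  Module.compHom (X ⟶ Y) (A.φ Y)

/-- `Hom^•(X, Y) = ⊕_{i ∈ ℤ/m} Hom(X, Σ^i Y)` as an `R`-module, for the `ℤ/m`-graded
triangulated category `C` (`m = 0` encodes `m = ∞`, in which case `ℤ/m = ℤ`), packaged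
as an object of `ModuleCat R`. -/
noncomputable def CentralAction.HomBullet (A : CentralAction (C := C) R) (m : ℕ)
    (X Y : C) : ModuleCat R :=
  letI : ∀ i : ZMod m, Module R (X ⟶ Y⟦(ZMod.cast i : ℤ)⟧) := fun _ => A.homModule _ _
  ModuleCat.of R (⨁ i : ZMod m, (X ⟶ Y⟦(ZMod.cast i : ℤ)⟧))

/-- `K` is a Koszul object `X ⫽ r` of `r : R` on `X`: there is a distinguished triangle
`X ⟶ X ⟶ K ⟶ X⟦1⟧` whose first map is `φ X r`. -/
def CentralAction.IsKoszulObject (A : CentralAction (C := C) R) (r : R) (X K : C) : Prop :=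
  ∃ (g : X ⟶ K) (h : K ⟶ X⟦(1 : ℤ)⟧),
    Triangle.mk (A.φ X r : X ⟶ X) g h ∈ (distTriang C)

/-- `K` is an iterated Koszul object `X ⫽ (r_1, …, r_n)`:
`X ⫽ (r_1, …, r_n) = (X ⫽ r_1) ⫽ (r_2, …, r_n)` (equivalently,
`X ⫽ (r_1, …, r_n) = (X ⫽ (r_1, …, r_{n-1})) ⫽ r_n`). -/
inductive CentralAction.IsIterKoszulObject (A : CentralAction (C := C) R) :
    C → List R → C → Prop
  | nil (X : C) : CentralAction.IsIterKoszulObject A X [] X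
  | cons {X Y K : C} {r : R} {rs : List R} (h₁ : A.IsKoszulObject r X Y)
      (h₂ : CentralAction.IsIterKoszulObject A Y rs K) :
      CentralAction.IsIterKoszulObject A X (r :: rs) K

end RouquierDim

/-!
Apply `Hom(-, X⟦i⟧)` to a Koszul triangle `W ⟶ W ⟶ W ⫽ r ⟶ W⟦1⟧` whose first map is `r`.
Since `r` is regular on `Hom^•(W, X)`, the restriction `Hom(W ⫽ r, X⟦i⟧) ⟶ Hom(W, X⟦i⟧)` vanishes
(its image is killed by `r`), so the long exact sequence collapses to
`Hom(W⟦1⟧, X⟦i⟧) ⟶ Hom(W⟦1⟧, X⟦i⟧) ⟶ Hom(W ⫽ r, X⟦i⟧) ⟶ 0` with first map `r`.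
Identifying `Hom(W⟦1⟧, X⟦i⟧)` with `Hom(W, X⟦i - 1⟧)` and reindexing over `ℤ/m` (this is where
`Σ^m ≅ id` enters) gives `Hom^•(W ⫽ r, X) ≅ Hom^•(W, X) / r`. Regularity passes along this
isomorphism, so induction over the sequence yields the quotient by `(a_1, …, a_n)`.
-/

namespace DirectSum

section

variable {R ι : Type*} [Semiring R] {M N P : ι → Type*}
  [∀ i, AddCommMonoid (M i)] [∀ i, AddCommMonoid (N i)] [∀ i, AddCommMonoid (P i)]
  [∀ i, Module R (M i)] [∀ i, Module R (N i)] [∀ i, Module R (P i)]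

theorem exact_lmap {f : ∀ i, M i →ₗ[R] N i} {g : ∀ i, N i →ₗ[R] P i}
    (hfg : ∀ i, Function.Exact (f i) (g i)) : Function.Exact (lmap f) (lmap g) := by
  rw [LinearMap.exact_iff, ker_lmap, range_lmap]
  simp_rw [LinearMap.exact_iff.mp (hfg _)]

end

theorem lmap_lsmul {R ι : Type*} [CommSemiring R] {M : ι → Type*} [∀ i, AddCommMonoid (M i)]
    [∀ i, Module R (M i)] (r : R) :
    lmap (fun i => LinearMap.lsmul R (M i) r) = LinearMap.lsmul R (⨁ i, M i) r :=
  rfl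

end DirectSum

namespace CategoryTheory

variable {C : Type*} [Category C] [HasShift C ℤ]

theorem nonempty_shiftFunctor_mul_iso_id {m : ℤ} (e : shiftFunctor C m ≅ 𝟭 C) (k : ℤ) :
    Nonempty (shiftFunctor C (m * k) ≅ 𝟭 C) := by
  induction k using Int.induction_on with
  | zero => exact ⟨shiftFunctorZero' C _ (mul_zero m)⟩
  | succ k ih =>
    exact ⟨shiftFunctorAdd' C (m * k) m _ (by ring) ≪≫ Functor.isoWhiskerRight ih.some _ ≪≫
      Functor.leftUnitor _ ≪≫ e⟩
  | pred k ih =>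
    exact ⟨(Functor.rightUnitor _).symm ≪≫ Functor.isoWhiskerLeft _ e.symm ≪≫
      (shiftFunctorAdd' C (m * (-k - 1)) m (m * -k) (by ring)).symm ≪≫ ih.some⟩

theorem nonempty_shiftFunctor_iso_of_modEq {m : ℤ} (e : shiftFunctor C m ≅ 𝟭 C) {a b : ℤ}
    (hab : a ≡ b [ZMOD m]) : Nonempty (shiftFunctor C a ≅ shiftFunctor C b) := by
  obtain ⟨k, hk⟩ := hab.dvd
  exact ⟨(shiftFunctorAdd' C a (m * k) b (by omega) ≪≫
    Functor.isoWhiskerLeft _ (nonempty_shiftFunctor_mul_iso_id e k).some ≪≫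
    Functor.rightUnitor _).symm⟩

end CategoryTheory

section Triangles

variable {C : Type*} [Category C] [Preadditive C] [HasZeroObject C] [HasShift C ℤ]
  [∀ n : ℤ, (CategoryTheory.shiftFunctor C n).Additive] [Pretriangulated C]
  {T : Triangle C}

theorem CategoryTheory.Pretriangulated.Triangle.exists_mor₁_comp_eq_iff (hT : T ∈ distTriang C)
    {Z : C} (f : T.obj₁ ⟶ Z) :
    (∃ v, T.mor₁ ≫ v = f) ↔ T.mor₃ ≫ f⟦(1 : ℤ)⟧' = 0 := by
  constructor
  · rintro ⟨v, rfl⟩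
    rw [Functor.map_comp, ← assoc, comp_distTriang_mor_zero₃₁ T hT, zero_comp]
  · intro hf
    obtain ⟨q, hq⟩ : ∃ q : T.obj₂⟦(1 : ℤ)⟧ ⟶ Z⟦(1 : ℤ)⟧, f⟦1⟧' = (-T.mor₁⟦1⟧') ≫ q :=
      yoneda_exact₃ _ (rot_of_distTriang _ hT) _ hf
    obtain ⟨v, rfl⟩ := (CategoryTheory.shiftFunctor C (1 : ℤ)).map_surjective q
    refine ⟨-v, (CategoryTheory.shiftFunctor C (1 : ℤ)).map_injective ?_⟩
    rw [Functor.map_comp, Functor.map_neg, Preadditive.comp_neg, ← Preadditive.neg_comp, hq]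

theorem CategoryTheory.Pretriangulated.Triangle.exists_mor₃_comp_shift_map_eq
    (hT : T ∈ distTriang C) {Z : C} (t : T.obj₃ ⟶ Z⟦(1 : ℤ)⟧)
    (ht : T.mor₂ ≫ t = 0) : ∃ f : T.obj₁ ⟶ Z, T.mor₃ ≫ f⟦(1 : ℤ)⟧' = t := by
  obtain ⟨q, rfl⟩ := yoneda_exact₃ T hT t ht
  obtain ⟨f, rfl⟩ := (CategoryTheory.shiftFunctor C (1 : ℤ)).map_surjective q
  exact ⟨f, rfl⟩

end Triangles

namespace RouquierDim

section CentralAction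

variable {C : Type*} [Category C] [Preadditive C] [HasShift C ℤ] {R : Type*} [CommRing R]
  (A : CentralAction (C := C) R)

theorem CentralAction.homModule_smul_eq_comp (r : R) {X Y : C} (f : X ⟶ Y) :
    letI := A.homModule X Y; r • f = A.φ X r ≫ f :=
  (A.natural f r).symm

theorem CentralAction.eq_zero_of_isSMulRegular_homBullet {m : ℕ} {W X : C} {r : R}
    (hr : IsSMulRegular (A.HomBullet m W X) r) {i : ZMod m} (t : W ⟶ X⟦(ZMod.cast i : ℤ)⟧)
    (ht : A.φ W r ≫ t = 0) : t = 0 := by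
  let _ : ∀ i : ZMod m, Module R (W ⟶ X⟦(ZMod.cast i : ℤ)⟧) := fun _ => A.homModule _ _
  have hri : IsSMulRegular (W ⟶ X⟦(ZMod.cast i : ℤ)⟧) r :=
    hr.of_injective (lof R (ZMod m) (fun i => W ⟶ X⟦(ZMod.cast i : ℤ)⟧) i)
      (of_injective i)
  apply hri
  change r • t = r • 0
  rw [smul_zero, A.homModule_smul_eq_comp, ht]

end CentralAction

section Koszul

variable {C : Type*} [Category C] [Preadditive C] [HasZeroObject C] [HasShift C ℤ]
  [∀ n : ℤ, (shiftFunctor C n).Additive] [Pretriangulated C] {R : Type*} [CommRing R]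
  {A : CentralAction (C := C) R} {m : ℕ}

theorem CentralAction.IsKoszulObject.nonempty_homBullet_equiv_quotSMulTop
    (hgr : Nonempty (shiftFunctor C (m : ℤ) ≅ 𝟭 C)) {r : R} {W Y : C}
    (hK : A.IsKoszulObject r W Y) (X : C) (hr : IsSMulRegular (A.HomBullet m W X) r) :
    Nonempty (A.HomBullet m Y X ≃ₗ[R] QuotSMulTop r (A.HomBullet m W X)) := by
  obtain ⟨e⟩ := hgr
  obtain ⟨g, h, hT⟩ := hK
  let _ : ∀ (K : C) (i : ZMod m), Module R (K ⟶ X⟦(ZMod.cast i : ℤ)⟧) :=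
    fun K _ => A.homModule _ _
  let σ := Equiv.addRight (1 : ZMod m)
  have hu (i : ZMod m) :
      Nonempty (X⟦(ZMod.cast (σ.symm i) : ℤ)⟧⟦(1 : ℤ)⟧ ≅ X⟦(ZMod.cast i : ℤ)⟧) := by
    obtain ⟨e'⟩ := nonempty_shiftFunctor_iso_of_modEq e
      (a := ZMod.cast (σ.symm i) + 1) (b := ZMod.cast i) (by
        rw [← ZMod.intCast_eq_intCast_iff]
        push_cast [ZMod.intCast_zmod_cast]
        simp [σ])
    exact ⟨(shiftFunctorAdd C _ _).symm.app X ≪≫ e'.app X⟩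
  let ψ (i : ZMod m) :
      (W ⟶ X⟦(ZMod.cast (σ.symm i) : ℤ)⟧) →ₗ[R] (Y ⟶ X⟦(ZMod.cast i : ℤ)⟧) :=
    { toFun f := h ≫ f⟦(1 : ℤ)⟧' ≫ (hu i).some.hom
      map_add' := by simp
      map_smul' s f := by
        simp only [A.homModule_smul_eq_comp, RingHom.id_apply, Functor.map_comp,
          ← A.shift_comm, A.natural, assoc] }
  have hexact (i : ZMod m) : Function.Exact (LinearMap.lsmul R _ r) (ψ i) := fun f => by
    change h ≫ f⟦(1 : ℤ)⟧' ≫ (hu i).some.hom = 0 ↔ ∃ v, r • v = f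
    simp only [← assoc, A.homModule_smul_eq_comp, Preadditive.IsIso.comp_right_eq_zero]
    exact (Triangle.exists_mor₁_comp_eq_iff hT f).symm
  have hsurj (i : ZMod m) : Function.Surjective (ψ i) := fun t => by
    have hgt : g ≫ t = 0 := A.eq_zero_of_isSMulRegular_homBullet hr (g ≫ t) (by
      rw [← assoc, show A.φ W r ≫ g = 0 from comp_distTriang_mor_zero₁₂ _ hT, zero_comp])
    obtain ⟨f, hf⟩ : ∃ f : W ⟶ _, h ≫ f⟦(1 : ℤ)⟧' = t ≫ (hu i).some.inv :=
      Triangle.exists_mor₃_comp_shift_map_eq hT _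
        (show g ≫ t ≫ _ = 0 by rw [← assoc, hgt, zero_comp])
    exact ⟨f, show h ≫ f⟦(1 : ℤ)⟧' ≫ _ = t by rw [← assoc, hf]; simp⟩
  have hΦ := DirectSum.exact_lmap hexact
  rw [lmap_lsmul] at hΦ
  exact ⟨(hΦ.linearEquivOfSurjective ((lmap_surjective ψ).mpr hsurj)).symm ≪≫ₗ
    (LinearMap.exact_lsmul_mkQ_smul_top _ r).linearEquivOfSurjective (Submodule.mkQ_surjective _)
    ≪≫ₗ QuotSMulTop.congr r
      (lequivCongrLeft R (M := fun i => W ⟶ X⟦(ZMod.cast i : ℤ)⟧) σ).symm⟩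

theorem CentralAction.IsIterKoszulObject.nonempty_homBullet_equiv_quotient
    (hgr : Nonempty (shiftFunctor C (m : ℤ) ≅ 𝟭 C)) {W K : C} {rs : List R}
    (hK : A.IsIterKoszulObject W rs K) (X : C)
    (hreg : RingTheory.Sequence.IsWeaklyRegular (A.HomBullet m W X) rs) :
    Nonempty (A.HomBullet m K X ≃ₗ[R]
      A.HomBullet m W X ⧸ (Ideal.ofList rs • ⊤ : Submodule R (A.HomBullet m W X))) := by
  induction hK with
  | nil => exact ⟨(Submodule.quotEquivOfEqBot _ (by simp)).symm⟩
  | cons hr _ ih =>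
    rw [RingTheory.Sequence.isWeaklyRegular_cons_iff] at hreg
    obtain ⟨e⟩ := hr.nonempty_homBullet_equiv_quotSMulTop hgr X hreg.1
    obtain ⟨f⟩ := ih ((e.isWeaklyRegular_congr _).mpr hreg.2)
    exact ⟨f ≪≫ₗ Submodule.Quotient.equiv _ _ e
      (by rw [Submodule.map_smul'', Submodule.map_top, LinearEquiv.range]) ≪≫ₗ
      (Submodule.quotOfListConsSMulTopEquivQuotSMulTopInner _ _ _).symm⟩

end Koszul

variable {C : Type u} [Category.{v} C] [Preadditive C] [HasZeroObject C]
  [HasShift C ℤ] [∀ n : ℤ, (shiftFunctor C n).Additive] [Pretriangulated C]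
  [HasBinaryBiproducts C]

variable {R : Type*} [CommRing R]

/-- Let `C` be a `ℤ/m`-graded triangulated category (`1 ≤ m ≤ ∞`; here
`m = 0` encodes `m = ∞`), `R` a commutative ring acting centrally on `C`, `X` an object and
`M = Hom^•(X, X)`. If `a_1, …, a_n ∈ R` is an `M`-regular sequence, then there is an
isomorphism of `R`-modules `Hom^•(X ⫽ (a_1, …, a_n), X) ≅ M/(a_1, …, a_n)M`. -/
theorem homBullet_koszul_left
    (A : CentralAction (C := C) R) (m : ℕ)
    (hgr : Nonempty (shiftFunctor C (m : ℤ) ≅ 𝟭 C))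
    (X : C) (as : List R)
    (hreg : RingTheory.Sequence.IsRegular (A.HomBullet m X X) as)
    (K : C) (hK : A.IsIterKoszulObject X as K) :
    Nonempty ((A.HomBullet m K X) ≃ₗ[R]
      ((A.HomBullet m X X) ⧸
        (Ideal.ofList as • (⊤ : Submodule R (A.HomBullet m X X))))) :=
  hK.nonempty_homBullet_equiv_quotient hgr X hreg.toIsWeaklyRegular

end RouquierDim
end

section
/- Let 𝒯 be a ℤ/m-graded triangulated category (1 ≤ m ≤ ∞), R a commutative ring acting centrally on 𝒯, X an object, and M = Hom^•(X, X). If a_1, …, a_n ∈ R is an M-regular sequence, then there is an isomorphism of R-modules Hom^•(X, X⫽(a_1, …, a_n)) ≅ M/(a_1, …, a_n)M. -/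
open CategoryTheory Category Limits Pretriangulated DirectSum

universe v u

namespace RouquierDim

variable {C : Type u} [Category.{v} C] [Preadditive C] [HasZeroObject C]
  [HasShift C ℤ] [∀ n : ℤ, (shiftFunctor C n).Additive] [Pretriangulated C]
  [HasBinaryBiproducts C]

variable {R : Type*} [CommRing R]

section Aux

variable {R : Type*} [CommRing R]

/-- Shifting by a multiple of `m` is isomorphic to the identity, objectwise. -/
lemma shift_iso_of_mul {m : ℕ} (hgr : Nonempty (shiftFunctor C (m : ℤ) ≅ 𝟭 C)) :
    ∀ (n : ℕ) (W : C), Nonempty ((W⟦((m : ℤ) * (n : ℤ))⟧) ≅ W) := by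
  intro n
  induction n with
  | zero =>
    intro W
    exact ⟨(shiftFunctorZero' C ((m : ℤ) * ((0 : ℕ) : ℤ)) (by simp)).app W⟩
  | succ n ih =>
    intro W
    obtain ⟨e⟩ := ih W
    obtain ⟨em⟩ := hgr
    exact ⟨(shiftFunctorAdd' C ((m : ℤ) * (n : ℤ)) (m : ℤ)
        ((m : ℤ) * ((n + 1 : ℕ) : ℤ)) (by push_cast; ring)).app W ≪≫
      (shiftFunctor C (m : ℤ)).mapIso e ≪≫ em.app W⟩

/-- Two shifts whose difference is divisible by `m` are isomorphic, objectwise. -/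
lemma shift_iso_of_dvd {m : ℕ} (hgr : Nonempty (shiftFunctor C (m : ℤ) ≅ 𝟭 C))
    {a b : ℤ} (h : (m : ℤ) ∣ a - b) (W : C) : Nonempty ((W⟦a⟧) ≅ (W⟦b⟧)) := by
  have key : ∀ (a b : ℤ), (∃ n : ℕ, a = (m : ℤ) * (n : ℤ) + b) →
      Nonempty ((W⟦a⟧) ≅ (W⟦b⟧)) := by
    rintro a b ⟨n, rfl⟩
    obtain ⟨e⟩ := shift_iso_of_mul hgr n W
    exact ⟨(shiftFunctorAdd' C ((m : ℤ) * (n : ℤ)) b ((m : ℤ) * (n : ℤ) + b) rfl).app W ≪≫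
      (shiftFunctor C b).mapIso e⟩
  obtain ⟨k, hk⟩ := h
  rcases le_or_gt 0 k with hk0 | hk0
  · exact key a b ⟨k.toNat, by rw [Int.toNat_of_nonneg hk0]; linarith⟩
  · obtain ⟨e⟩ := key b a ⟨(-k).toNat,
      by rw [Int.toNat_of_nonneg (by linarith), mul_neg]; linarith⟩
    exact ⟨e.symm⟩

end Aux

set_option linter.unusedSectionVars false
open scoped Pointwise

set_option maxHeartbeats 1000000 in
/-- Hom-bullet of a Koszul object: `Hom^•(X, Y ⫽ r) ≅ Hom^•(X, Y) / r Hom^•(X, Y)`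
when `r` is regular on `Hom^•(X, Y)`. -/
lemma step (A : CentralAction (C := C) R) (m : ℕ)
    (hgr : Nonempty (shiftFunctor C (m : ℤ) ≅ 𝟭 C)) (X : C) {Y Z : C} {r : R}
    (hKo : A.IsKoszulObject r Y Z)
    (hreg : IsSMulRegular (A.HomBullet m X Y) r) :
    Nonempty ((A.HomBullet m X Z) ≃ₗ[R] QuotSMulTop r (A.HomBullet m X Y)) := by
  classical
  obtain ⟨g, h, hT⟩ := hKo
  set T : Triangle C := Triangle.mk (A.φ Y r) g h with hTdef
  letI inst : ∀ W : C, Module R (X ⟶ W) := fun W => A.homModule X W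
  have smul_def : ∀ (W : C) (s : R) (f : X ⟶ W), s • f = f ≫ A.φ W s := fun _ _ _ => rfl
  have natural_comp : ∀ {W W' : C} (ϕ : W ⟶ W') (s : R) (f : X ⟶ W),
      (s • f) ≫ ϕ = s • (f ≫ ϕ) := by
    intro W W' ϕ s f
    rw [smul_def, smul_def, Category.assoc, Category.assoc, A.natural]
  -- the degreewise maps
  let pℓ : ∀ i : ZMod m,
      (X ⟶ Y⟦(ZMod.cast i : ℤ)⟧) →ₗ[R] (X ⟶ Z⟦(ZMod.cast i : ℤ)⟧) := fun i =>
    { toFun := fun f => f ≫ g⟦(ZMod.cast i : ℤ)⟧'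
      map_add' := fun _ _ => Preadditive.add_comp _ _ _ _ _ _
      map_smul' := fun s f => natural_comp _ s f }
  let p : (⨁ i : ZMod m, (X ⟶ Y⟦(ZMod.cast i : ℤ)⟧)) →ₗ[R]
      (⨁ i : ZMod m, (X ⟶ Z⟦(ZMod.cast i : ℤ)⟧)) :=
    DFinsupp.mapRange.linearMap pℓ
  -- kernel elements factor
  have factor : ∀ (i : ZMod m) (f : X ⟶ Y⟦(ZMod.cast i : ℤ)⟧),
      f ≫ g⟦(ZMod.cast i : ℤ)⟧' = 0 → ∃ w, f = r • w := by
    intro i f hf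
    have hT' := Triangle.shift_distinguished T hT (ZMod.cast i : ℤ)
    obtain ⟨w, hw⟩ := Triangle.coyoneda_exact₂ _ hT' f (by
      show f ≫ ((ZMod.cast i : ℤ).negOnePow • g⟦(ZMod.cast i : ℤ)⟧') = 0
      rw [Linear.comp_units_smul, hf, smul_zero])
    have hww : ∃ w' : X ⟶ Y⟦(ZMod.cast i : ℤ)⟧,
        f = w' ≫ ((ZMod.cast i : ℤ).negOnePow •
          (A.φ Y r)⟦(ZMod.cast i : ℤ)⟧') := ⟨w, hw⟩
    obtain ⟨w', hw'⟩ := hww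
    refine ⟨(ZMod.cast i : ℤ).negOnePow • w', hw'.trans ?_⟩
    rw [Linear.comp_units_smul, ← A.shift_comm, smul_def, Linear.units_smul_comp]
  -- regularity degreewise
  have comp_reg : ∀ k : ZMod m, IsSMulRegular (X ⟶ Y⟦(ZMod.cast k : ℤ)⟧) r := by
    intro k u1 u2 h12
    have h12' : r • u1 = r • u2 := h12
    have h1 : (DirectSum.lof R (ZMod m)
        (fun i : ZMod m => X ⟶ Y⟦(ZMod.cast i : ℤ)⟧) k) (r • u1) =
        (DirectSum.lof R (ZMod m)
        (fun i : ZMod m => X ⟶ Y⟦(ZMod.cast i : ℤ)⟧) k) (r • u2) := by rw [h12']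
    rw [map_smul, map_smul] at h1
    have h2 := hreg h1
    rw [← DirectSum.single_eq_lof, ← DirectSum.single_eq_lof] at h2
    exact DFinsupp.single_injective (β := fun i : ZMod m => X ⟶ Y⟦(ZMod.cast i : ℤ)⟧)
      (i := k) h2
  -- degreewise surjectivity
  have surj_i : ∀ (i : ZMod m) (u : X ⟶ Z⟦(ZMod.cast i : ℤ)⟧),
      ∃ f, f ≫ g⟦(ZMod.cast i : ℤ)⟧' = u := by
    intro i u
    have hdvd : (m : ℤ) ∣ ((1 : ℤ) + (ZMod.cast i : ℤ)) - (ZMod.cast (i + 1) : ℤ) := by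
      rw [← ZMod.intCast_zmod_eq_zero_iff_dvd]
      push_cast [ZMod.intCast_zmod_cast]
      ring
    obtain ⟨e0⟩ := shift_iso_of_dvd hgr hdvd Y
    have e2 : ((Y⟦(1 : ℤ)⟧)⟦(ZMod.cast i : ℤ)⟧) ≅ Y⟦(ZMod.cast (i + 1) : ℤ)⟧ :=
      ((shiftFunctorAdd' C (1 : ℤ) (ZMod.cast i : ℤ)
        ((1 : ℤ) + (ZMod.cast i : ℤ)) rfl).app Y).symm ≪≫ e0
    -- regularity transferred to X ⟶ (Y⟦1⟧)⟦cast i⟧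
    have reg' : IsSMulRegular (X ⟶ (Y⟦(1 : ℤ)⟧)⟦(ZMod.cast i : ℤ)⟧) r := by
      intro u1 u2 h12
      have h12' : r • u1 = r • u2 := h12
      have h3 : r • (u1 ≫ e2.hom) = r • (u2 ≫ e2.hom) := by
        rw [← natural_comp, ← natural_comp, h12']
      have h4 := comp_reg (i + 1) h3
      simpa only [cancel_mono] using h4
    -- u ≫ h⟦cast i⟧' = 0
    have key0 : u ≫ h⟦(ZMod.cast i : ℤ)⟧' = 0 := by
      apply reg'
      show r • (u ≫ h⟦(ZMod.cast i : ℤ)⟧') = r • (0 : X ⟶ (Y⟦(1 : ℤ)⟧)⟦(ZMod.cast i : ℤ)⟧)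
      have z : h ≫ (A.φ Y r)⟦(1 : ℤ)⟧' = 0 := comp_distTriang_mor_zero₃₁ T hT
      rw [smul_zero, smul_def, A.shift_comm, A.shift_comm, Category.assoc,
        ← Functor.map_comp, z, Functor.map_zero, comp_zero]
    -- apply coyoneda exactness to the shifted triangle
    have hT' := Triangle.shift_distinguished T hT (ZMod.cast i : ℤ)
    obtain ⟨f, hf⟩ := Triangle.coyoneda_exact₃ _ hT' u (by
      show u ≫ ((ZMod.cast i : ℤ).negOnePow • (h⟦(ZMod.cast i : ℤ)⟧' ≫
        (shiftFunctorComm C 1 (ZMod.cast i : ℤ)).hom.app Y)) = 0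
      rw [Linear.comp_units_smul, ← Category.assoc, key0, zero_comp, smul_zero])
    have hff : ∃ f' : X ⟶ Y⟦(ZMod.cast i : ℤ)⟧,
        u = f' ≫ ((ZMod.cast i : ℤ).negOnePow • g⟦(ZMod.cast i : ℤ)⟧') := ⟨f, hf⟩
    obtain ⟨f', hf'⟩ := hff
    refine ⟨(ZMod.cast i : ℤ).negOnePow • f', ?_⟩
    rw [Linear.units_smul_comp, ← Linear.comp_units_smul]
    exact hf'.symm
  -- p is surjective
  have hp_apply : ∀ (x : ⨁ i : ZMod m, (X ⟶ Y⟦(ZMod.cast i : ℤ)⟧)) (k : ZMod m),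
      p x k = pℓ k (x k) := fun x k =>
    DFinsupp.mapRange_apply (f := fun i x => pℓ i x)
      (hf := fun i => (pℓ i).map_zero) x k
  have hsurj : Function.Surjective p := by
    intro z
    induction z using DirectSum.induction_on with
    | zero => exact ⟨0, map_zero p⟩
    | of k u =>
      obtain ⟨f, hf⟩ := surj_i k u
      refine ⟨DirectSum.of _ k f, ?_⟩
      have : p (DirectSum.of _ k f) = DirectSum.of _ k (pℓ k f) :=
        DFinsupp.mapRange_single (f := fun i x => pℓ i x)
          (hf := fun i => (pℓ i).map_zero) (i := k) (b := f)
      rw [this]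
      exact congrArg _ hf
    | add x y hx hy =>
      obtain ⟨a, ha⟩ := hx
      obtain ⟨b, hb⟩ := hy
      exact ⟨a + b, by rw [map_add, ha, hb]⟩
  -- kernel of p
  have hker : LinearMap.ker p = r • (⊤ : Submodule R
      (⨁ i : ZMod m, (X ⟶ Y⟦(ZMod.cast i : ℤ)⟧))) := by
    apply le_antisymm
    · intro x hx
      have hx0 : ∀ k : ZMod m, pℓ k (x k) = 0 := by
        intro k
        have h0 := LinearMap.mem_ker.mp hx
        rw [← hp_apply x k, h0]
        rfl
      choose w hw using fun k => factor k (x k) (hx0 k)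
      have hxx : r • (DFinsupp.mk x.support fun k => w k) = x := by
        refine DFinsupp.ext fun k => ?_
        rw [DFinsupp.smul_apply, DFinsupp.mk_apply]
        by_cases hk : k ∈ x.support
        · rw [dif_pos hk]
          exact (hw k).symm
        · rw [dif_neg hk, smul_zero]
          exact (DFinsupp.notMem_support_iff.mp hk).symm
      rw [← hxx]
      exact Submodule.smul_mem_pointwise_smul _ r ⊤ Submodule.mem_top
    · intro x hx
      rw [← SetLike.mem_coe, Submodule.coe_pointwise_smul] at hx
      obtain ⟨y, -, rfl⟩ := Set.mem_smul_set.mp hx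
      rw [LinearMap.mem_ker]
      refine DFinsupp.ext fun k => ?_
      rw [hp_apply]
      have hyk : (r • y) k = r • (y k) := DFinsupp.smul_apply _ _ _
      rw [hyk]
      show (r • y k) ≫ g⟦(ZMod.cast k : ℤ)⟧' = _
      have z : A.φ Y r ≫ g = 0 := comp_distTriang_mor_zero₁₂ T hT
      rw [smul_def, Category.assoc, A.shift_comm, ← Functor.map_comp, z,
        Functor.map_zero, comp_zero]
      rfl
  exact ⟨(LinearMap.quotKerEquivOfSurjective p hsurj).symm.trans
    (Submodule.quotEquivOfEq _ _ hker)⟩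

/-- Let `C` be a `ℤ/m`-graded triangulated category (`1 ≤ m ≤ ∞`; here
`m = 0` encodes `m = ∞`), `R` a commutative ring acting centrally on `C`, `X` an object and
`M = Hom^•(X, X)`. If `a_1, …, a_n ∈ R` is an `M`-regular sequence, then there is an
isomorphism of `R`-modules `Hom^•(X, X ⫽ (a_1, …, a_n)) ≅ M/(a_1, …, a_n)M`. -/
theorem homBullet_koszul_right
    (A : CentralAction (C := C) R) (m : ℕ)
    (hgr : Nonempty (shiftFunctor C (m : ℤ) ≅ 𝟭 C))
    (X : C) (as : List R)
    (hreg : RingTheory.Sequence.IsRegular (A.HomBullet m X X) as)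
    (K : C) (hK : A.IsIterKoszulObject X as K) :
    Nonempty ((A.HomBullet m X K) ≃ₗ[R]
      ((A.HomBullet m X X) ⧸
        (Ideal.ofList as • (⊤ : Submodule R (A.HomBullet m X X))))) := by
  have main : ∀ (bs : List R) (Y L : C), A.IsIterKoszulObject Y bs L →
      RingTheory.Sequence.IsWeaklyRegular (A.HomBullet m X Y) bs →
      Nonempty ((A.HomBullet m X L) ≃ₗ[R]
        ((A.HomBullet m X Y) ⧸
          (Ideal.ofList bs • (⊤ : Submodule R (A.HomBullet m X Y))))) := by
    intro bs Y L hiter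
    induction hiter with
    | nil Y' =>
      intro _
      exact ⟨(Submodule.quotEquivOfEqBot _ (by simp)).symm⟩
    | @cons Y' Z' L' r rs h₁ h₂ ih =>
      intro hwreg
      rw [RingTheory.Sequence.isWeaklyRegular_cons_iff] at hwreg
      obtain ⟨hr, hrs⟩ := hwreg
      obtain ⟨e⟩ := step A m hgr X h₁ hr
      have hrs' : RingTheory.Sequence.IsWeaklyRegular (A.HomBullet m X Z') rs :=
        (e.symm.isWeaklyRegular_congr rs).mp hrs
      obtain ⟨e2⟩ := ih hrs'
      refine ⟨e2.trans ((Submodule.Quotient.equiv _ _ e ?_).trans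
        (Submodule.quotOfListConsSMulTopEquivQuotSMulTopInner
          (A.HomBullet m X Y') r rs).symm)⟩
      show Submodule.map e.toLinearMap (Ideal.ofList rs • ⊤) = Ideal.ofList rs • ⊤
      rw [Submodule.map_smul'', Submodule.map_top]
      congr 1
      exact LinearEquiv.range e
  exact main as X K hK hreg.toIsWeaklyRegular
end RouquierDim
end
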